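/- arXiv:1301.3259 — 5 statements merged into one kernel-verified Lean document; each statement's English description precedes it below -/
import Mathlib

section
/- Let D be an algebraic derivation on an affine k-domain B (char k = 0, k algebraically closed), meaning for every b ∈ B the span of {D^n(b) : n ≥ 0} is finite-dimensional over k. Then B = ⊕_{λ∈k} B_λ where B_λ = {b : (D-λ)^n(b)=0 for some n}; i.e., every b ∈ B is a finite sum of elements of the generalized eigenspaces B_λ, and the sum of the B_λ is direct. -/
/-- For an algebraic derivation `D` on an affine k-domain `B`
(k algebraically closed, char 0), `B = ⊕_{λ ∈ k} B_λ` where `B_λ` is the generalized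
λ-eigenspace `⨆ n, ker (D - λ)ⁿ`: the family of generalized eigenspaces is internally
a direct sum decomposition of `B`. -/
theorem algebraic_derivation_grading (k B : Type*) [Field k] [IsAlgClosed k] [CharZero k]
    [DecidableEq k] [CommRing B] [IsDomain B] [Algebra k B] [Algebra.FiniteType k B]
    (D : Derivation k B B)
    (halg : ∀ b : B, FiniteDimensional k
      (Submodule.span k (Set.range fun n : ℕ => (D.toLinearMap ^ n) b))) :
    DirectSum.IsInternal (fun lam : k =>
      ⨆ n : ℕ, LinearMap.ker ((D.toLinearMap - lam • (LinearMap.id : B →ₗ[k] B)) ^ n)) := by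
  set f : Module.End k B := D.toLinearMap with hf
  have hEq : (fun lam : k =>
      ⨆ n : ℕ, LinearMap.ker ((D.toLinearMap - lam • (LinearMap.id : B →ₗ[k] B)) ^ n))
      = fun lam : k => f.maxGenEigenspace lam := by
    funext lam
    rw [← Module.End.iSup_genEigenspace_eq]
    congr 1
    funext n
    rw [Module.End.genEigenspace_nat]
    rfl
  rw [hEq]
  rw [DirectSum.isInternal_submodule_iff_iSupIndep_and_iSup_eq_top]
  constructor
  · exact f.independent_maxGenEigenspace
  · rw [eq_top_iff]
    intro b _
    set M : Submodule k B := Submodule.span k (Set.range fun n : ℕ => (f ^ n) b) with hM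
    have hfM : ∀ x : B, x ∈ M → f x ∈ M := by
      intro x hx
      refine Submodule.span_induction (p := fun x _ => f x ∈ M) ?_ ?_ ?_ ?_ hx
      · rintro _ ⟨n, rfl⟩
        exact Submodule.subset_span ⟨n + 1, by simp only [pow_succ']; rfl⟩
      · simp
      · intro x y _ _ hx hy; rw [map_add]; exact M.add_mem hx hy
      · intro c x _ hx; rw [map_smul]; exact M.smul_mem c hx
    have : FiniteDimensional k M := halg b
    have hbM : b ∈ M := Submodule.subset_span ⟨0, by simp⟩
    have htop := Module.End.iSup_maxGenEigenspace_eq_top (f.restrict hfM)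
    have hmem : (⟨b, hbM⟩ : M) ∈ ⨆ μ : k, Module.End.maxGenEigenspace (f.restrict hfM) μ := by
      rw [htop]; trivial
    have := Submodule.mem_map_of_mem (f := M.subtype) hmem
    rw [Submodule.map_iSup] at this
    have hle : ∀ μ : k, Submodule.map M.subtype (Module.End.maxGenEigenspace (f.restrict hfM) μ)
        ≤ f.maxGenEigenspace μ := by
      intro μ
      rw [show Module.End.maxGenEigenspace (f.restrict hfM) μ =
        Module.End.genEigenspace (f.restrict hfM) μ ⊤ from rfl,
        Module.End.genEigenspace_restrict f M ⊤ μ hfM]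
      exact Submodule.map_comap_le _ _
    exact iSup_mono hle this
end

section
/- Let D be an algebraic derivation on a normal affine k-domain B (k algebraically closed, char 0), with associated monoid Λ = {λ ∈ k : B_λ ≠ 0} contained in a totally ordered abelian group M with all λ ∈ Λ nonnegative. Then Q(B_0) ∩ B = B_0: if b ∈ B lies in the fraction field of B_0 then b ∈ B_0. -/
section Aux
variable {k B : Type*} [Field k] [CommRing B] [Algebra k B] (D : Derivation k B B)

lemma step_lemma (μ : k) (a x : B) :
    (D.toLinearMap - μ • (1 : Module.End k B)) (a * x)
      = a * ((D.toLinearMap - μ • (1 : Module.End k B)) x) + (D a) * x := by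
  simp [Derivation.leibniz, smul_eq_mul, mul_sub, mul_smul_comm]
  ring

lemma mulstab : ∀ (N m n : ℕ) (μ : k) (a x : B), m + n ≤ N →
    (D.toLinearMap ^ m) a = 0 →
    ((D.toLinearMap - μ • (1 : Module.End k B)) ^ n) x = 0 →
    ((D.toLinearMap - μ • (1 : Module.End k B)) ^ (m + n)) (a * x) = 0 := by
  intro N
  induction N with
  | zero =>
    intro m n μ a x hmn ha hx
    have hm : m = 0 := by omega
    have hn : n = 0 := by omega
    subst hm hn
    simp only [pow_zero, Module.End.one_apply] at ha
    simp [ha]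
  | succ N ih =>
    intro m n μ a x hmn ha hx
    match m, n with
    | 0, n =>
      simp only [pow_zero, Module.End.one_apply] at ha
      simp [ha]
    | m, 0 =>
      simp only [pow_zero, Module.End.one_apply] at hx
      simp [hx]
    | m+1, n+1 =>
      have hx' : ((D.toLinearMap - μ • (1 : Module.End k B)) ^ n)
          ((D.toLinearMap - μ • (1 : Module.End k B)) x) = 0 := by
        rw [← Module.End.mul_apply, ← pow_succ]; exact hx
      have h1 := ih (m+1) n μ a ((D.toLinearMap - μ • (1 : Module.End k B)) x)
        (by omega) ha hx'
      have ha' : (D.toLinearMap ^ m) (D a) = 0 := by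
        rw [show (D.toLinearMap ^ m) (D a) = (D.toLinearMap ^ (m+1)) a by
          rw [pow_succ]; rfl]
        exact ha
      have h2 := ih m (n+1) μ (D a) x (by omega) ha' hx
      rw [show m + (n+1) = m + 1 + n by omega] at h2
      rw [show m + 1 + (n + 1) = (m + 1 + n) + 1 by omega, pow_succ,
        Module.End.mul_apply, step_lemma, map_add, h1, h2, add_zero]

end Aux



/-- Let `D` be an algebraic derivation on a normal affine k-domain `B`
(k algebraically closed, char 0), with associated monoid `Λ = {λ : B_λ ≠ 0}` contained in
the nonnegative part of a totally ordered abelian group (encoded by an additive map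
`ι : k →+ Γ` into a linearly ordered abelian group, injective on the subgroup generated by
`Λ` and nonnegative on `Λ`). Then `Q(B₀) ∩ B = B₀`: if `b ∈ B` satisfies `a₀·b = a₁` with
`a₀, a₁ ∈ B₀`, `a₀ ≠ 0`, then `b ∈ B₀`. -/
theorem QB0_inter_B (k B Γ : Type*) [Field k] [IsAlgClosed k] [CharZero k]
    [CommRing B] [IsDomain B] [IsIntegrallyClosed B] [Algebra k B] [Algebra.FiniteType k B]
    [AddCommGroup Γ] [LinearOrder Γ] [IsOrderedAddMonoid Γ]
    (D : Derivation k B B)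
    (halg : ∀ b : B, FiniteDimensional k
      (Submodule.span k (Set.range fun n : ℕ => (D.toLinearMap ^ n) b)))
    (ι : k →+ Γ)
    (hpos : ∀ lam : k, (∃ b : B, b ≠ 0 ∧ ∃ n : ℕ, 0 < n ∧
      ((D.toLinearMap - lam • (LinearMap.id : B →ₗ[k] B)) ^ n) b = 0) → 0 ≤ ι lam)
    (hinj : ∀ lam ∈ AddSubgroup.closure {lam : k | ∃ b : B, b ≠ 0 ∧ ∃ n : ℕ, 0 < n ∧
      ((D.toLinearMap - lam • (LinearMap.id : B →ₗ[k] B)) ^ n) b = 0},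
      ι lam = 0 → lam = 0)
    (b a0 a1 : B)
    (ha0 : ∃ n : ℕ, 0 < n ∧ (D.toLinearMap ^ n) a0 = 0)
    (ha1 : ∃ n : ℕ, 0 < n ∧ (D.toLinearMap ^ n) a1 = 0)
    (ha0ne : a0 ≠ 0) (hab : a0 * b = a1) :
    ∃ n : ℕ, 0 < n ∧ (D.toLinearMap ^ n) b = 0 := by
  haveI : NoZeroSMulDivisors k B :=
    inferInstance
  set f : Module.End k B := D.toLinearMap with hf
  set S : k → Submodule k B := f.maxGenEigenspace with hS
  -- multiplication by an element of B₀ preserves each generalized eigenspace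
  have hmul : ∀ (μ : k) (x : B), x ∈ S μ → a0 * x ∈ S μ := by
    intro μ x hx
    obtain ⟨m, -, hm⟩ := ha0
    obtain ⟨n, hn⟩ := (Module.End.mem_maxGenEigenspace f μ x).mp hx
    exact (Module.End.mem_maxGenEigenspace f μ _).mpr
      ⟨m + n, mulstab D (m + n) m n μ a0 x le_rfl hm hn⟩
  -- b lies in the sup of all generalized eigenspaces
  set V : Submodule k B := Submodule.span k (Set.range fun n : ℕ => (f ^ n) b) with hVdef
  have hV : ∀ x ∈ V, f x ∈ V := by
    intro x hx
    have hle : V ≤ V.comap f := by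
      rw [hVdef, Submodule.span_le]
      rintro _ ⟨n, rfl⟩
      exact Submodule.subset_span ⟨n + 1, by
        show (f ^ (n + 1)) b = f ((f ^ n) b)
        rw [pow_succ']; rfl⟩
    exact hle hx
  haveI : FiniteDimensional k V := halg b
  set g : Module.End k V := f.restrict hV with hg
  have hres1 : ∀ (μ : k) (x : V),
      (((g - μ • (1 : Module.End k V)) x : V) : B)
        = (f - μ • (1 : Module.End k B)) (x : B) := by
    intro μ x
    simp [hg, LinearMap.restrict_apply]
  have hres : ∀ (μ : k) (n : ℕ) (x : V),
      ((((g - μ • (1 : Module.End k V)) ^ n) x : V) : B)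
        = ((f - μ • (1 : Module.End k B)) ^ n) (x : B) := by
    intro μ n
    induction n with
    | zero => intro x; simp
    | succ n ihn =>
      intro x
      rw [pow_succ', pow_succ', Module.End.mul_apply, Module.End.mul_apply,
        hres1, ihn]
  have hbV : b ∈ V := Submodule.subset_span ⟨0, by simp⟩
  have hmap : ∀ μ : k, (g.maxGenEigenspace μ).map V.subtype ≤ S μ := by
    rintro μ _ ⟨x, hx, rfl⟩
    obtain ⟨n, hn⟩ := (Module.End.mem_maxGenEigenspace g μ x).mp hx
    refine (Module.End.mem_maxGenEigenspace f μ _).mpr ⟨n, ?_⟩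
    show ((f - μ • (1 : Module.End k B)) ^ n) (x : B) = 0
    rw [← hres μ n x, hn, ZeroMemClass.coe_zero]
  have hbsup : b ∈ ⨆ μ : k, S μ := by
    have htop : (⟨b, hbV⟩ : V) ∈ ⨆ μ : k, g.maxGenEigenspace μ := by
      rw [Module.End.iSup_maxGenEigenspace_eq_top]; trivial
    have : b ∈ Submodule.map V.subtype (⨆ μ : k, g.maxGenEigenspace μ) :=
      ⟨⟨b, hbV⟩, htop, rfl⟩
    rw [Submodule.map_iSup] at this
    exact (iSup_mono hmap) this
  -- split off the zero eigenspace
  set N : Submodule k B := ⨆ μ : k, ⨆ _ : μ ≠ 0, S μ with hN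
  have hdisj : Disjoint (S 0) N := Module.End.independent_maxGenEigenspace f 0
  have hle : (⨆ μ : k, S μ) ≤ S 0 ⊔ N := iSup_le fun μ => by
    by_cases hμ : μ = 0
    · subst hμ; exact le_sup_left
    · exact le_trans (le_iSup₂ (f := fun μ (_ : μ ≠ 0) => S μ) μ hμ) le_sup_right
  have hble : b ∈ S 0 ⊔ N := hle hbsup
  obtain ⟨b0, hb0, c, hc, hbc⟩ := Submodule.mem_sup.mp hble
  -- multiplication by a0 preserves N
  have hcN : a0 * c ∈ N := by
    have hmapN : Submodule.map (LinearMap.mulLeft k a0) N ≤ N := by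
      rw [hN, Submodule.map_iSup]
      refine iSup_mono fun μ => ?_
      rw [Submodule.map_iSup]
      refine iSup_mono fun hμ => ?_
      rintro _ ⟨x, hx, rfl⟩
      exact hmul μ x hx
    exact hmapN ⟨c, hc, rfl⟩
  -- a0 * c lies in S 0 as well
  have hmem0 : ∀ y : B, (∃ n : ℕ, 0 < n ∧ (f ^ n) y = 0) → y ∈ S 0 := by
    rintro y ⟨n, -, hn⟩
    refine (Module.End.mem_maxGenEigenspace f 0 y).mpr ⟨n, ?_⟩
    simpa [zero_smul, sub_zero] using hn
  have hc0 : a0 * c ∈ S 0 := by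
    have h1 : a1 ∈ S 0 := hmem0 a1 ha1
    have h2 : a0 * b0 ∈ S 0 := hmul 0 b0 hb0
    have : a0 * c = a1 - a0 * b0 := by
      rw [← hab, ← hbc]; ring
    rw [this]
    exact Submodule.sub_mem _ h1 h2
  have hczero : c = 0 := by
    have : a0 * c = 0 := by
      have := hdisj.le_bot ⟨hc0, hcN⟩
      simpa using this
    rcases mul_eq_zero.mp this with h | h
    · exact absurd h ha0ne
    · exact h
  -- conclude
  have hb0' : b ∈ S 0 := by
    rw [← hbc, hczero, add_zero]; exact hb0
  obtain ⟨n, hn⟩ := (Module.End.mem_maxGenEigenspace f 0 b).mp hb0'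
  have hn' : (f ^ n) b = 0 := by simpa [zero_smul, sub_zero] using hn
  exact ⟨n + 1, Nat.succ_pos n, by
    rw [pow_succ', Module.End.mul_apply, hn', map_zero]⟩
end

section
/- Let R = ⊕_{n≥0} R_n be a one-dimensional affine graded domain over a field K_0 of characteristic 0 with R_0 = K_0, and suppose K_0 is algebraically closed in Q(R). Then R is a polynomial ring K_0[ξ] for any nonzero ξ ∈ R_1, with R_n = K_0 ξ^n for every n ≥ 0. -/
open DirectSum Polynomial

section aux

variable {K0 R : Type*} [Field K0] [CommRing R] [Algebra K0 R]
variable (𝒜 : ℕ → Submodule K0 R) [GradedAlgebra 𝒜]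

lemma aux_proj_mem (i : ℕ) (r : R) : GradedRing.proj 𝒜 i r ∈ 𝒜 i := by
  rw [GradedRing.proj_apply]; exact SetLike.coe_mem _

lemma aux_proj_mul {d i : ℕ} {a : R} (ha : a ∈ 𝒜 d) (w : R) :
    GradedRing.proj 𝒜 (d + i) (a * w) = a * GradedRing.proj 𝒜 i w := by
  refine DirectSum.Decomposition.inductionOn 𝒜
    (motive := fun w => GradedRing.proj 𝒜 (d + i) (a * w) = a * GradedRing.proj 𝒜 i w)
    ?_ (fun {j} m => ?_) (fun x y hx hy => ?_) w
  · simp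
  · rcases eq_or_ne j i with rfl | hj
    · rw [GradedRing.proj_apply, GradedRing.proj_apply,
        DirectSum.decompose_of_mem_same 𝒜 (SetLike.mul_mem_graded ha m.2),
        DirectSum.decompose_of_mem_same 𝒜 m.2]
    · rw [GradedRing.proj_apply, GradedRing.proj_apply,
        DirectSum.decompose_of_mem_ne 𝒜 (SetLike.mul_mem_graded ha m.2) (by omega),
        DirectSum.decompose_of_mem_ne 𝒜 m.2 hj, mul_zero]
  · rw [mul_add, map_add, map_add, hx, hy, mul_add]

lemma aux_proj_mul_lt {d i : ℕ} {a : R} (ha : a ∈ 𝒜 d) (w : R) (hid : i < d) :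
    GradedRing.proj 𝒜 i (a * w) = 0 := by
  refine DirectSum.Decomposition.inductionOn 𝒜
    (motive := fun w => GradedRing.proj 𝒜 i (a * w) = 0)
    ?_ (fun {j} m => ?_) (fun x y hx hy => ?_) w
  · simp
  · rw [GradedRing.proj_apply,
      DirectSum.decompose_of_mem_ne 𝒜 (SetLike.mul_mem_graded ha m.2) (by omega)]
  · rw [mul_add, map_add, hx, hy, add_zero]

lemma aux_fg_of_le_fg {K M : Type*} [Field K] [AddCommGroup M] [Module K M]
    {N V : Submodule K M} (h : N ≤ V) (hV : V.FG) : N.FG := by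
  haveI : Module.Finite K V := Module.Finite.iff_fg.mpr hV
  haveI : IsNoetherian K V := IsNoetherian.iff_fg.mpr inferInstance
  have h1 : (N.comap V.subtype).FG := IsNoetherian.noetherian _
  have h2 : (N.comap V.subtype).map V.subtype = N := by
    rw [Submodule.map_comap_subtype, inf_eq_right.mpr h]
  exact h2 ▸ h1.map _

end aux

/-- A one-dimensional affine graded domain `R = ⊕_{n≥0} Rₙ` over a field
`K₀` of characteristic 0 with `R₀ = K₀` and `K₀` algebraically closed in `Q(R)` is a
polynomial ring `K₀[ξ]` for any nonzero `ξ ∈ R₁`, with `Rₙ = K₀·ξⁿ` for all `n`. -/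
theorem dim_one_graded_is_polynomial (K0 R : Type*) [Field K0] [CharZero K0]
    [CommRing R] [IsDomain R] [Algebra K0 R] [Algebra.FiniteType K0 R]
    (hdim : ringKrullDim R = 1)
    (𝒜 : ℕ → Submodule K0 R) [GradedAlgebra 𝒜]
    (h0 : ∀ x : R, x ∈ 𝒜 0 ↔ ∃ c : K0, x = algebraMap K0 R c)
    (hac : ∀ ξ : FractionRing R,
      (∃ p : Polynomial K0, p ≠ 0 ∧
        Polynomial.eval₂ ((algebraMap R (FractionRing R)).comp (algebraMap K0 R)) ξ p = 0) →
      ∃ c : K0, ξ = algebraMap R (FractionRing R) (algebraMap K0 R c)) :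
    ∀ ξ : R, ξ ∈ 𝒜 1 → ξ ≠ 0 →
      Transcendental K0 ξ ∧
      ∀ (n : ℕ) (x : R), x ∈ 𝒜 n ↔ ∃ c : K0, x = algebraMap K0 R c * ξ ^ n := by
  classical
  intro ξ hξ1 hξ0
  haveI hNoeth : IsNoetherianRing R := Algebra.FiniteType.isNoetherianRing K0 R
  -- powers of ξ are homogeneous
  have hpow : ∀ i : ℕ, ξ ^ i ∈ 𝒜 i := by
    intro i
    simpa [smul_eq_mul] using SetLike.pow_mem_graded i hξ1
  -- transcendence of ξ
  have htr : Transcendental K0 ξ := by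
    rw [transcendental_iff]
    intro p hp
    ext j
    rw [Polynomial.coeff_zero]
    by_cases hj : j ≤ p.natDegree
    · have h1 : (Polynomial.aeval ξ p : R) =
          ∑ i ∈ Finset.range (p.natDegree + 1), p.coeff i • ξ ^ i :=
        Polynomial.aeval_eq_sum_range ξ
      have h2 : GradedRing.proj 𝒜 j (Polynomial.aeval ξ p : R) = p.coeff j • ξ ^ j := by
        rw [h1, map_sum]
        rw [Finset.sum_eq_single j]
        · rw [GradedRing.proj_apply,
            DirectSum.decompose_of_mem_same 𝒜 (Submodule.smul_mem _ _ (hpow j))]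
        · intro i _ hij
          rw [GradedRing.proj_apply,
            DirectSum.decompose_of_mem_ne 𝒜 (Submodule.smul_mem _ _ (hpow i)) hij]
        · intro h
          exact absurd (Finset.mem_range.mpr (by omega)) h
      rw [hp, map_zero] at h2
      have := h2.symm
      rcases smul_eq_zero.mp this with h | h
      · exact h
      · exact absurd h (pow_ne_zero _ hξ0)
    · exact Polynomial.coeff_eq_zero_of_natDegree_lt (by omega)
  refine ⟨htr, ?_⟩
  -- the irrelevant ideal
  set m : Ideal R := RingHom.ker (GradedRing.projZeroRingHom 𝒜) with hm_def
  have hmem_m : ∀ x : R, x ∈ m ↔ GradedRing.proj 𝒜 0 x = 0 := by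
    intro x
    rw [RingHom.mem_ker, GradedRing.projZeroRingHom_apply, GradedRing.proj_apply]
  have hm_prime : m.IsPrime := RingHom.ker_isPrime _
  have hmem_m_of_deg : ∀ (i : ℕ) (z : R), z ∈ 𝒜 i → 1 ≤ i → z ∈ m := by
    intro i z hz hi
    rw [hmem_m, GradedRing.proj_apply, DirectSum.decompose_of_mem_ne 𝒜 hz (by omega)]
  have hξm : ξ ∈ m := hmem_m_of_deg 1 ξ hξ1 le_rfl
  -- homogeneous proper ideals are contained in m
  have h_homog_le_m : ∀ J : Ideal R, J.IsHomogeneous 𝒜 → J ≠ ⊤ → J ≤ m := by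
    intro J hJhom hJtop x hx
    rw [hmem_m]
    have h1 : GradedRing.proj 𝒜 0 x ∈ J := by
      rw [GradedRing.proj_apply]; exact hJhom 0 hx
    obtain ⟨c, hc⟩ := (h0 _).mp (aux_proj_mem 𝒜 0 x)
    by_cases hc0 : c = 0
    · rw [hc, hc0, map_zero]
    · exact absurd (J.eq_top_of_isUnit_mem (hc ▸ h1)
        ((isUnit_iff_ne_zero.mpr hc0).map (algebraMap K0 R))) hJtop
  -- dimension-1 argument: primes below m are ⊥ or m
  have h_chain : ∀ J : Ideal R, J.IsPrime → J ≤ m → J = ⊥ ∨ J = m := by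
    intro J hJ hJm
    by_contra hcon
    push_neg at hcon
    obtain ⟨hJbot, hJne⟩ := hcon
    haveI := hJ
    let P0 : PrimeSpectrum R := ⟨⊥, Ideal.bot_prime⟩
    let P1 : PrimeSpectrum R := ⟨J, hJ⟩
    let P2 : PrimeSpectrum R := ⟨m, hm_prime⟩
    have h01 : P0 < P1 := by
      rw [← PrimeSpectrum.asIdeal_lt_asIdeal]
      exact lt_of_le_of_ne bot_le (Ne.symm hJbot)
    have h12 : P1 < P2 := by
      rw [← PrimeSpectrum.asIdeal_lt_asIdeal]
      exact lt_of_le_of_ne hJm hJne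
    let s : LTSeries (PrimeSpectrum R) :=
      ⟨2, ![P0, P1, P2], by
        intro i
        fin_cases i
        · exact h01
        · exact h12⟩
    have h2 := Order.LTSeries.length_le_krullDim s
    have : ((2 : ℕ) : WithBot (WithTop ℕ)) ≤ ringKrullDim R := h2
    rw [hdim] at this
    norm_num at this
    exact absurd this (by norm_cast)
  -- m is contained in the radical of (ξ)
  have hrad : m ≤ (Ideal.span {ξ}).radical := by
    have hspan_hom : (Ideal.span {ξ}).IsHomogeneous 𝒜 :=
      Ideal.homogeneous_span 𝒜 {ξ} (by rintro x rfl; exact ⟨1, hξ1⟩)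
    rw [hspan_hom.radical_eq]
    refine le_sInf ?_
    rintro J ⟨hJhom, hle, hJprime⟩
    haveI := hJprime
    have hJm : J ≤ m := h_homog_le_m J hJhom hJprime.ne_top
    rcases h_chain J hJprime hJm with h | h
    · exfalso
      have : ξ ∈ J := hle (Ideal.subset_span rfl)
      rw [h] at this
      exact hξ0 (Ideal.mem_bot.mp this)
    · exact h.ge
  obtain ⟨N, hN⟩ : ∃ N, m ^ N ≤ Ideal.span {ξ} :=
    Ideal.exists_pow_le_of_le_radical_of_fg hrad (IsNoetherian.noetherian m)
  -- homogeneous generators of m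
  obtain ⟨sgen, hsgen⟩ : ∃ s : Finset R, Ideal.span ↑s = m := (IsNoetherian.noetherian m)
  set T0 : Finset (R × ℕ) := sgen.biUnion (fun a =>
    (DirectSum.decompose 𝒜 a).support.image (fun i => (GradedRing.proj 𝒜 i a, i))) with hT0_def
  set T : Finset R := T0.image Prod.fst with hT_def
  have hT0mem : ∀ p ∈ T0, p.1 ∈ 𝒜 p.2 ∧ 1 ≤ p.2 ∧ p.1 ∈ m := by
    intro p hp
    rw [hT0_def, Finset.mem_biUnion] at hp
    obtain ⟨a, ha, hpa⟩ := hp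
    rw [Finset.mem_image] at hpa
    obtain ⟨i, hi, rfl⟩ := hpa
    have ham : a ∈ m := hsgen ▸ Ideal.subset_span (by exact_mod_cast ha)
    have hi1 : 1 ≤ i := by
      rcases Nat.eq_zero_or_pos i with rfl | h
      · exfalso
        have h00 := (hmem_m a).mp ham
        rw [DFinsupp.mem_support_iff] at hi
        exact hi (by rwa [GradedRing.proj_apply, ZeroMemClass.coe_eq_zero] at h00)
      · exact h
    exact ⟨aux_proj_mem 𝒜 i a, hi1, hmem_m_of_deg i _ (aux_proj_mem 𝒜 i a) hi1⟩
  -- degree function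
  have hdeg_ex : ∀ h ∈ T, ∃ i, (h, i) ∈ T0 := by
    intro h hh
    rw [hT_def, Finset.mem_image] at hh
    obtain ⟨p, hp, rfl⟩ := hh
    exact ⟨p.2, hp⟩
  set deg : R → ℕ := fun h => if hh : ∃ i, (h, i) ∈ T0 then hh.choose else 1 with hdeg_def
  set D : ℕ := T0.sup Prod.snd with hD_def
  have hdeg : ∀ h ∈ T, h ∈ 𝒜 (deg h) ∧ 1 ≤ deg h ∧ deg h ≤ D ∧ h ∈ m := by
    intro h hh
    obtain ⟨i, hi⟩ := hdeg_ex h hh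
    rw [hdeg_def]
    simp only
    rw [dif_pos ⟨i, hi⟩]
    have hch := (⟨i, hi⟩ : ∃ i, (h, i) ∈ T0).choose_spec
    obtain ⟨h1, h2, h3⟩ := hT0mem _ hch
    exact ⟨h1, h2, Finset.le_sup (f := Prod.snd) hch, h3⟩
  have hTm : Ideal.span ↑T = m := by
    apply le_antisymm
    · rw [Ideal.span_le]
      intro h hh
      exact (hdeg h (by exact_mod_cast hh)).2.2.2
    · rw [← hsgen, Ideal.span_le]
      intro a ha
      have : a = ∑ i ∈ (DirectSum.decompose 𝒜 a).support, (DirectSum.decompose 𝒜 a i : R) :=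
        (DirectSum.sum_support_decompose 𝒜 a).symm
      rw [this]
      apply Ideal.sum_mem
      intro i hi
      apply Ideal.subset_span
      rw [hT_def]
      simp only [Finset.coe_image, Set.mem_image]
      refine ⟨(GradedRing.proj 𝒜 i a, i), ?_, by rw [GradedRing.proj_apply]⟩
      rw [hT0_def]
      simp only [Finset.mem_coe, Finset.mem_biUnion]
      exact ⟨a, by exact_mod_cast ha, Finset.mem_image.mpr ⟨i, hi, rfl⟩⟩
  -- the representation lemma
  have hrep : ∀ j : ℕ, 1 ≤ j → ∀ z ∈ 𝒜 j, ∃ c : R → R,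
      (∀ h ∈ T, c h ∈ 𝒜 (j - deg h)) ∧ z = ∑ h ∈ T, c h * h := by
    intro j hj z hz
    have hzm : z ∈ m := hmem_m_of_deg j z hz hj
    rw [← hTm] at hzm
    obtain ⟨f, -, hf⟩ := Submodule.mem_span_finset.mp hzm
    refine ⟨fun h => if deg h ≤ j then GradedRing.proj 𝒜 (j - deg h) (f h) else 0, ?_, ?_⟩
    · intro h hh
      by_cases hc : deg h ≤ j
      · simp only [if_pos hc]; exact aux_proj_mem 𝒜 _ _
      · simp only [if_neg hc]; exact Submodule.zero_mem _
    · have hz' : z = GradedRing.proj 𝒜 j z := (DirectSum.decompose_of_mem_same 𝒜 hz).symm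
      rw [hz', ← hf, map_sum]
      apply Finset.sum_congr rfl
      intro h hh
      rw [smul_eq_mul, mul_comm (f h) h]
      by_cases hc : deg h ≤ j
      · simp only [if_pos hc]
        have hje : j = deg h + (j - deg h) := by omega
        conv_lhs => rw [hje, aux_proj_mul 𝒜 (hdeg h hh).1]
        rw [mul_comm]
      · simp only [if_neg hc]
        rw [aux_proj_mul_lt 𝒜 (hdeg h hh).1 _ (by omega), zero_mul]
  -- high degree pieces are in powers of m
  have hpowm : ∀ k : ℕ, ∀ j : ℕ, k * D < j → ∀ z ∈ 𝒜 j, z ∈ m ^ k := by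
    intro k
    induction k with
    | zero => intro j hj z hz; rw [pow_zero, Ideal.one_eq_top]; exact Submodule.mem_top
    | succ k IH =>
      intro j hj z hz
      have hj1 : 1 ≤ j := by
        have hD : (k + 1) * D = k * D + D := by ring
        omega
      obtain ⟨c, hc1, hc2⟩ := hrep j hj1 z hz
      rw [hc2]
      apply Ideal.sum_mem
      intro h hh
      obtain ⟨hh1, hh2, hh3, hh4⟩ := hdeg h hh
      have hlt : k * D < j - deg h := by
        have hD : (k + 1) * D = k * D + D := by ring
        omega
      rw [pow_succ]
      exact Ideal.mul_mem_mul (IH _ hlt _ (hc1 h hh)) hh4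
  -- finite dimensionality of graded pieces
  have hfin : ∀ j : ℕ, ∃ G : Finset R, ∀ z ∈ 𝒜 j, z ∈ Submodule.span K0 (G : Set R) := by
    intro j
    induction j using Nat.strong_induction_on with
    | _ j IH =>
      rcases Nat.eq_zero_or_pos j with rfl | hj
      · refine ⟨{1}, fun z hz => ?_⟩
        obtain ⟨c, rfl⟩ := (h0 z).mp hz
        rw [show algebraMap K0 R c = c • (1 : R) from ((Algebra.smul_def c (1 : R)).trans (mul_one _)).symm]
        exact Submodule.smul_mem _ _ (Submodule.subset_span (by simp))
      · set g : R → Finset R := fun h =>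
          if hh : j - deg h < j then (IH _ hh).choose else ∅ with hg_def
        refine ⟨T.biUnion (fun h => (g h).image (fun u => u * h)), fun z hz => ?_⟩
        obtain ⟨c, hc1, hc2⟩ := hrep j hj z hz
        rw [hc2]
        apply Submodule.sum_mem
        intro h hh
        obtain ⟨hh1, hh2, hh3, hh4⟩ := hdeg h hh
        have hlt : j - deg h < j := by omega
        have hch : c h ∈ Submodule.span K0 ((IH _ hlt).choose : Set R) :=
          (IH _ hlt).choose_spec _ (hc1 h hh)
        have hgh : g h = (IH _ hlt).choose := by rw [hg_def]; simp only; rw [dif_pos hlt]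
        have : c h * h = (LinearMap.mulRight K0 h) (c h) := rfl
        rw [this]
        have hmap : (LinearMap.mulRight K0 h) (c h) ∈
            Submodule.map (LinearMap.mulRight K0 h) (Submodule.span K0 ((g h) : Set R)) :=
          ⟨c h, by rw [hgh]; exact hch, rfl⟩
        rw [Submodule.map_span] at hmap
        refine Submodule.span_mono ?_ hmap
        intro u hu
        obtain ⟨v, hv, rfl⟩ := hu
        simp only [Finset.coe_biUnion, Set.mem_iUnion, Finset.coe_image, Set.mem_image,
          Finset.mem_coe]
        exact ⟨h, hh, v, by exact_mod_cast hv, rfl⟩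
  -- division step
  have hstep : ∀ j : ℕ, N * D < j → ∀ z ∈ 𝒜 j, ∃ y, y ∈ 𝒜 (j - 1) ∧ z = ξ * y := by
    intro j hj z hz
    have hj1 : 1 ≤ j := by omega
    have hzm : z ∈ Ideal.span {ξ} := hN (hpowm N j hj z hz)
    obtain ⟨w, hw⟩ := Ideal.mem_span_singleton'.mp hzm
    refine ⟨GradedRing.proj 𝒜 (j - 1) w, aux_proj_mem 𝒜 _ _, ?_⟩
    have hz' : z = GradedRing.proj 𝒜 j z := (DirectSum.decompose_of_mem_same 𝒜 hz).symm
    rw [hz', ← hw, mul_comm w ξ]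
    have hje : j = 1 + (j - 1) := by omega
    conv_lhs => rw [hje, aux_proj_mul 𝒜 hξ1]
  set N1 : ℕ := N * D + 1 with hN1_def
  -- descent to degree N1
  have hdesc : ∀ j : ℕ, N1 ≤ j → ∀ z ∈ 𝒜 j, ∃ y, y ∈ 𝒜 N1 ∧ z = ξ ^ (j - N1) * y := by
    intro j hj
    induction j, hj using Nat.le_induction with
    | base => intro z hz; exact ⟨z, hz, by simp⟩
    | succ j hj IH =>
      intro z hz
      obtain ⟨y', hy'1, hy'2⟩ := hstep (j + 1) (by omega) z hz
      have : j + 1 - 1 = j := by omega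
      rw [this] at hy'1
      obtain ⟨y, hy1, hy2⟩ := IH y' hy'1
      refine ⟨y, hy1, ?_⟩
      rw [hy'2, hy2]
      have : j + 1 - N1 = (j - N1) + 1 := by omega
      rw [this, pow_succ]
      ring
  -- main argument
  intro n x
  constructor
  · intro hx
    set F := FractionRing R
    set φ : R →+* F := algebraMap R F with hφ_def
    have hφinj : Function.Injective φ := IsFractionRing.injective R F
    have hξF : φ ξ ≠ 0 := fun h => hξ0 (hφinj (by rw [h, map_zero]))
    set t : F := φ x / (φ ξ) ^ n with ht_def
    have hxpow : ∀ k : ℕ, x ^ k ∈ 𝒜 (k * n) := by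
      intro k
      simpa [smul_eq_mul] using SetLike.pow_mem_graded k hx
    -- key: all powers of t lie in φ(𝒜 N1)/φ(ξ)^N1
    have key : ∀ k : ℕ, ∃ y, y ∈ 𝒜 N1 ∧ (φ ξ) ^ N1 * t ^ k = φ y := by
      intro k
      have hkey : ∃ y, y ∈ 𝒜 N1 ∧ ξ ^ N1 * x ^ k = ξ ^ (k * n) * y := by
        by_cases hc : N1 ≤ k * n
        · obtain ⟨y, hy1, hy2⟩ := hdesc (k * n) hc _ (hxpow k)
          refine ⟨y, hy1, ?_⟩
          rw [hy2, ← mul_assoc, ← pow_add]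
          congr 2
          omega
        · push_neg at hc
          refine ⟨ξ ^ (N1 - k * n) * x ^ k, ?_, ?_⟩
          · have := SetLike.mul_mem_graded (hpow (N1 - k * n)) (hxpow k)
            have he : N1 - k * n + k * n = N1 := by omega
            rwa [he] at this
          · rw [← mul_assoc, ← pow_add]
            congr 2
            omega
      obtain ⟨y, hy1, hy2⟩ := hkey
      refine ⟨y, hy1, ?_⟩
      have hF := congrArg φ hy2
      rw [map_mul, map_mul, map_pow, map_pow, map_pow] at hF
      rw [ht_def, div_pow, ← pow_mul]
      rw [mul_comm n k]
      rw [mul_div_assoc', div_eq_iff (pow_ne_zero _ hξF)]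
      linear_combination hF
    obtain ⟨G, hG⟩ := hfin N1
    -- the K0-linear map u ↦ φ u / φ ξ ^ N1
    haveI : IsScalarTower K0 R F := inferInstance
    set L : R →ₗ[K0] F := ((φ ξ) ^ N1)⁻¹ • (IsScalarTower.toAlgHom K0 R F).toLinearMap
      with hL_def
    have hLapp : ∀ u : R, L u = ((φ ξ) ^ N1)⁻¹ * φ u := fun u => rfl
    have ht_mem : ∀ k : ℕ, t ^ k ∈ Submodule.span K0 (L '' (G : Set R)) := by
      intro k
      obtain ⟨y, hy1, hy2⟩ := key k
      have htk : t ^ k = L y := by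
        rw [hLapp, ← hy2, ← mul_assoc, inv_mul_cancel₀ (pow_ne_zero _ hξF), one_mul]
      rw [htk]
      have : L y ∈ Submodule.map L (Submodule.span K0 (G : Set R)) := ⟨y, hG y hy1, rfl⟩
      rwa [Submodule.map_span] at this
    -- t is algebraic over K0
    have halg : ∃ p : Polynomial K0, p ≠ 0 ∧
        Polynomial.eval₂ ((algebraMap R F).comp (algebraMap K0 R)) t p = 0 := by
      have htow : (algebraMap R F).comp (algebraMap K0 R) = algebraMap K0 F :=
        (IsScalarTower.algebraMap_eq K0 R F).symm
      rw [htow]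
      have hSV : (Algebra.adjoin K0 {t}).toSubmodule ≤ Submodule.span K0 (L '' (G : Set R)) := by
        intro a ha
        rw [Algebra.adjoin_singleton_eq_range_aeval] at ha
        obtain ⟨p, rfl⟩ := ha
        show (Polynomial.aeval t) p ∈ _
        rw [Polynomial.aeval_eq_sum_range]
        apply Submodule.sum_mem
        intro i _
        exact Submodule.smul_mem _ _ (ht_mem i)
      have hfgS : (Algebra.adjoin K0 {t}).toSubmodule.FG :=
        aux_fg_of_le_fg hSV (Submodule.fg_span ((G.finite_toSet).image L))
      have hint : IsIntegral K0 t :=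
        IsIntegral.of_mem_of_fg _ hfgS _ (Algebra.self_mem_adjoin_singleton K0 t)
      obtain ⟨p, hp1, hp2⟩ := hint
      exact ⟨p, hp1.ne_zero, hp2⟩
    obtain ⟨c, hc⟩ := hac t halg
    refine ⟨c, hφinj ?_⟩
    rw [map_mul, map_pow]
    have : φ x = t * (φ ξ) ^ n := by
      rw [ht_def, div_mul_cancel₀ _ (pow_ne_zero _ hξF)]
    rw [this, hc]
  · rintro ⟨c, rfl⟩
    rw [show algebraMap K0 R c * ξ ^ n = c • ξ ^ n from (Algebra.smul_def c _).symm]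
    exact Submodule.smul_mem _ _ (hpow n)
end

section
/- Let B = k[x] be a polynomial ring in one variable over an algebraically closed field k of characteristic 0, and D a nontrivial algebraic k-derivation on B. Then after a suitable linear change of variable, either D = c·d/dx or D = c·x·d/dx for some c ∈ k*. -/
open Polynomial

/-- A derivation on `k[X]` is multiplication by `D X` composed with formal derivative. -/
lemma deriv_apply_aux (k : Type*) [Field k]
    (D : Derivation k (Polynomial k) (Polynomial k)) (p : Polynomial k) :
    D p = p.derivative * D X := by
  have h : D = Polynomial.mkDerivation k (D X) :=
    Polynomial.derivation_ext (by rw [Polynomial.mkDerivation_X])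
  conv_lhs => rw [h, Polynomial.mkDerivation_apply]
  rw [smul_eq_mul]

/-- A nontrivial algebraic k-derivation `D` on `k[x]` (k algebraically
closed, char 0) is, after a suitable change of variable `u` (a degree-one polynomial),
either `c·d/du` or `c·u·d/du` with `c ∈ k*`; equivalently `D(u) = c` or `D(u) = c·u`. -/
theorem algebraic_derivation_dim_one (k : Type*) [Field k] [IsAlgClosed k] [CharZero k]
    (D : Derivation k (Polynomial k) (Polynomial k)) (hD : D ≠ 0)
    (halg : ∀ b : Polynomial k, FiniteDimensional k
      (Submodule.span k (Set.range fun n : ℕ => (D.toLinearMap ^ n) b))) :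
    ∃ u : Polynomial k, u.degree = 1 ∧ ∃ c : k, c ≠ 0 ∧
      (D u = Polynomial.C c ∨ D u = Polynomial.C c * u) := by
  set f : Polynomial k := D X with hf
  have hkey : ∀ p : Polynomial k, D p = p.derivative * f := fun p => deriv_apply_aux k D p
  have hf0 : f ≠ 0 := by
    intro h0
    apply hD
    apply Polynomial.derivation_ext
    simp [← hf, h0]
  -- f has natDegree ≤ 1
  have hdeg : f.natDegree ≤ 1 := by
    by_contra hd
    push_neg at hd
    set d := f.natDegree with hdd
    have hd2 : 2 ≤ d := hd
    -- degree growth of iterates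
    have hiter : ∀ n : ℕ, ((D.toLinearMap ^ n) X).natDegree = n * (d - 1) + 1 := by
      intro n
      induction n with
      | zero => simp
      | succ n ih =>
        have hpow : (D.toLinearMap ^ (n+1)) X = D ((D.toLinearMap ^ n) X) := by
          rw [pow_succ']
          rfl
        set p := (D.toLinearMap ^ n) X with hp
        have hp1 : 0 < p.natDegree := by rw [ih]; omega
        have hdp : p.derivative ≠ 0 := by
          intro h0
          have := Polynomial.degree_derivative_eq p hp1
          rw [h0, Polynomial.degree_zero] at this
          exact absurd this.symm (by simp)
        have hdpnat : p.derivative.natDegree = p.natDegree - 1 := by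
          have := Polynomial.degree_derivative_eq p hp1
          have h2 := Polynomial.natDegree_eq_of_degree_eq_some this
          simpa using h2
        rw [hpow, hkey, Polynomial.natDegree_mul hdp hf0, hdpnat, ih, ← hdd]
        obtain ⟨e, he⟩ : ∃ e, d = e + 2 := ⟨d - 2, by omega⟩
        rw [he]
        simp only [Nat.add_sub_cancel]
        ring_nf
        omega
    -- finite-dimensionality gives bounded degree: contradiction
    have hfd := halg X
    set S := Submodule.span k (Set.range fun n : ℕ => (D.toLinearMap ^ n) X) with hS
    have hFG : S.FG := (Submodule.fg_iff_finiteDimensional S).2 hfd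
    obtain ⟨t, ht⟩ := hFG
    set N : ℕ := t.sup Polynomial.natDegree with hN
    have hle : S ≤ Polynomial.degreeLE k (N : WithBot ℕ) := by
      rw [← ht, Submodule.span_le]
      intro p hp
      rw [SetLike.mem_coe, Polynomial.mem_degreeLE]
      have h3 : p.natDegree ≤ N := Finset.le_sup hp
      exact le_trans Polynomial.degree_le_natDegree (by exact_mod_cast h3)
    have hmem : ∀ n : ℕ, (D.toLinearMap ^ n) X ∈ S := fun n =>
      Submodule.subset_span ⟨n, rfl⟩
    have hbound : ∀ n : ℕ, ((D.toLinearMap ^ n) X).natDegree ≤ N := by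
      intro n
      have := hle (hmem n)
      rw [Polynomial.mem_degreeLE] at this
      exact Polynomial.natDegree_le_iff_degree_le.2 this
    have h1 := hbound (N + 1)
    rw [hiter (N + 1)] at h1
    have h4 : N + 1 ≤ (N + 1) * (d - 1) :=
      Nat.le_mul_of_pos_right _ (by omega)
    omega
  -- now f = C a * X + C b
  have hdegle : f.degree ≤ 1 := Polynomial.degree_le_of_natDegree_le hdeg
  have hform := Polynomial.eq_X_add_C_of_degree_le_one hdegle
  set a := f.coeff 1 with ha
  set b := f.coeff 0 with hb
  by_cases haz : a = 0
  · -- f = C b, take u = X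
    have hfb : f = Polynomial.C b := by rw [hform, haz]; simp
    have hbne : b ≠ 0 := fun h0 => hf0 (by rw [hfb, h0, map_zero])
    exact ⟨X, Polynomial.degree_X, b, hbne, Or.inl (by rw [← hf, hfb])⟩
  · -- f = C a * X + C b, take u = X + C (b/a)
    refine ⟨X + Polynomial.C (b / a), ?_, a, haz, Or.inr ?_⟩
    · exact Polynomial.degree_X_add_C (b / a)
    · have hDu : D (X + Polynomial.C (b / a)) = f := by
        rw [hkey]
        simp
      rw [hDu, hform]
      rw [mul_add, ← Polynomial.C_mul, mul_div_cancel₀ b haz]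
end

section
/- Let B = k[x,y] over a field k of characteristic 0, λ ∈ k*, and D = ∂/∂x + λ y ∂/∂y. Then: B_0 = k[x] (the set of elements killed by a power of D is exactly k[x]); B_{nλ} = k[x]·y^n for each n ≥ 0; and the kernel of the extension of D to k(x,y) is k. -/
open MvPolynomial

namespace MixedDerivAux

open Polynomial

variable {k : Type*} [Field k] [CharZero k]

/-! ### One-variable auxiliary lemmas -/

lemma coeff_mul_of_le {R : Type*} [CommSemiring R] {p q : R[X]} {a b : ℕ}
    (ha : p.natDegree ≤ a) (hb : q.natDegree ≤ b) :
    (p * q).coeff (a + b) = p.coeff a * q.coeff b := by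
  rw [Polynomial.coeff_mul]
  apply Finset.sum_eq_single (a, b)
  · rintro ⟨i, j⟩ hij hne
    rw [Finset.HasAntidiagonal.mem_antidiagonal] at hij
    rcases lt_or_ge a i with h | h
    · rw [Polynomial.coeff_eq_zero_of_natDegree_lt (lt_of_le_of_lt ha h), zero_mul]
    · have h' : b < j ∨ (i = a ∧ j = b) := by omega
      rcases h' with h' | ⟨rfl, rfl⟩
      · rw [Polynomial.coeff_eq_zero_of_natDegree_lt (lt_of_le_of_lt hb h'), mul_zero]
      · exact absurd rfl hne
  · intro h
    simp [Finset.mem_antidiagonal] at h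

lemma L_ne_zero {c : k} (hc : c ≠ 0) {a : k[X]} (ha : a ≠ 0) :
    derivative a + Polynomial.C c * a ≠ 0 := by
  intro h
  have h1 := congrArg (fun p => Polynomial.coeff p a.natDegree) h
  simp only [Polynomial.coeff_add, Polynomial.coeff_C_mul, Polynomial.coeff_zero,
    Polynomial.coeff_derivative,
    Polynomial.coeff_eq_zero_of_natDegree_lt (lt_add_one a.natDegree), zero_mul, zero_add] at h1
  exact (Polynomial.leadingCoeff_ne_zero.mpr ha) (by
    have := mul_eq_zero.mp h1
    rcases this with h2 | h2
    · exact absurd h2 hc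
    · exact h2)

lemma L_iter_ne_zero {c : k} (hc : c ≠ 0) {a : k[X]} (ha : a ≠ 0) (r : ℕ) :
    (fun p => derivative p + Polynomial.C c * p)^[r] a ≠ 0 := by
  induction r with
  | zero => simpa
  | succ r ih =>
      rw [Function.iterate_succ_apply']
      exact L_ne_zero hc ih

lemma wronskian_natDegree_eq {F G : k[X]} (hF : F ≠ 0) (hG : G ≠ 0)
    (h : derivative F * G = F * derivative G) : F.natDegree = G.natDegree := by
  by_cases hF' : derivative F = 0
  · have h2 : F * derivative G = 0 := by rw [← h, hF', zero_mul]
    have hG' : derivative G = 0 := by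
      rcases mul_eq_zero.mp h2 with h1 | h1
      · exact absurd h1 hF
      · exact h1
    rw [Polynomial.natDegree_eq_zero_of_derivative_eq_zero hF',
      Polynomial.natDegree_eq_zero_of_derivative_eq_zero hG']
  · have hG' : derivative G ≠ 0 := by
      intro h0
      apply hF'
      rw [h0, mul_zero] at h
      rcases mul_eq_zero.mp h with h1 | h1
      · exact h1
      · exact absurd h1 hG
    have hn : 1 ≤ F.natDegree := by
      by_contra h0
      push_neg at h0
      have : F.natDegree = 0 := by omega
      apply hF'
      rw [Polynomial.eq_C_of_natDegree_eq_zero this, Polynomial.derivative_C]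
    have hm : 1 ≤ G.natDegree := by
      by_contra h0
      push_neg at h0
      have : G.natDegree = 0 := by omega
      apply hG'
      rw [Polynomial.eq_C_of_natDegree_eq_zero this, Polynomial.derivative_C]
    have key := congrArg (fun p => Polynomial.coeff p (F.natDegree - 1 + G.natDegree)) h
    rw [coeff_mul_of_le ((Polynomial.natDegree_derivative_le F)) le_rfl] at key
    have hidx : F.natDegree - 1 + G.natDegree = F.natDegree + (G.natDegree - 1) := by omega
    rw [hidx, coeff_mul_of_le le_rfl (Polynomial.natDegree_derivative_le G)] at key
    rw [Polynomial.coeff_derivative, Polynomial.coeff_derivative] at key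
    have e1 : F.natDegree - 1 + 1 = F.natDegree := by omega
    have e2 : G.natDegree - 1 + 1 = G.natDegree := by omega
    rw [e1, e2, Polynomial.coeff_natDegree, Polynomial.coeff_natDegree] at key
    have hx : F.leadingCoeff * G.leadingCoeff ≠ 0 :=
      mul_ne_zero (Polynomial.leadingCoeff_ne_zero.mpr hF) (Polynomial.leadingCoeff_ne_zero.mpr hG)
    have key2 : (F.natDegree : k) * (F.leadingCoeff * G.leadingCoeff)
        = (G.natDegree : k) * (F.leadingCoeff * G.leadingCoeff) := by
      rw [Nat.cast_sub hn, Nat.cast_sub hm] at key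
      linear_combination key
    have := mul_right_cancel₀ hx key2
    exact_mod_cast this

lemma wronskian_eq_C_mul {F G : k[X]} (hG : G ≠ 0)
    (h : derivative F * G = F * derivative G) : ∃ c : k, F = Polynomial.C c * G := by
  by_cases hF : F = 0
  · exact ⟨0, by simp [hF]⟩
  have hdeg := wronskian_natDegree_eq hF hG h
  refine ⟨F.leadingCoeff / G.leadingCoeff, ?_⟩
  by_contra hne
  set c := F.leadingCoeff / G.leadingCoeff with hc
  set H := F - Polynomial.C c * G with hH
  have hH0 : H ≠ 0 := sub_ne_zero.mpr hne
  have hrel : derivative H * G = H * derivative G := by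
    rw [hH, Polynomial.derivative_sub, Polynomial.derivative_C_mul]
    linear_combination h
  have hdH := wronskian_natDegree_eq hH0 hG hrel
  have hcoeff : H.coeff G.natDegree = 0 := by
    rw [hH, Polynomial.coeff_sub, Polynomial.coeff_C_mul, Polynomial.coeff_natDegree, ← hdeg,
      Polynomial.coeff_natDegree, hc,
      div_mul_cancel₀ _ (Polynomial.leadingCoeff_ne_zero.mpr hG), sub_self]
  apply Polynomial.leadingCoeff_ne_zero.mpr hH0
  rw [Polynomial.leadingCoeff, hdH, hcoeff]

/-! ### Two-variable ring `k[x][y]` with the operator `Dp` -/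

/-- coefficientwise `d/dx` on `k[x][y]`. -/
noncomputable def cd (q : Polynomial (Polynomial k)) : Polynomial (Polynomial k) :=
  ⟨AddMonoidAlgebra.ofCoeff (Finsupp.mapRange (fun a => derivative a) (by simp) q.toFinsupp.coeff)⟩

lemma coeff_cd (q : Polynomial (Polynomial k)) (n : ℕ) :
    (cd q).coeff n = derivative (q.coeff n) := by
  rcases q with ⟨q⟩
  simp [cd, Polynomial.coeff_ofFinsupp, Polynomial.coeff]

/-- The operator `D` on `k[x][y]` : coefficientwise `d/dx` plus `λ · y · d/dy`. -/
noncomputable def Dp (lam : k) (q : Polynomial (Polynomial k)) : Polynomial (Polynomial k) :=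
  cd q + Polynomial.C (Polynomial.C lam) * (Polynomial.X * derivative q)

lemma coeff_Dp (lam : k) (q : Polynomial (Polynomial k)) (b : ℕ) :
    (Dp lam q).coeff b = derivative (q.coeff b) + Polynomial.C (lam * b) * q.coeff b := by
  rcases b with _ | n
  · simp [Dp, coeff_cd, Polynomial.coeff_add, Polynomial.mul_coeff_zero]
  · rw [Dp, Polynomial.coeff_add, coeff_cd, Polynomial.coeff_C_mul, Polynomial.coeff_X_mul,
      Polynomial.coeff_derivative, Polynomial.C_mul, Polynomial.C_eq_natCast]
    push_cast
    ring

lemma Dp_CC (lam : k) (a : k) : Dp lam (Polynomial.C (Polynomial.C a)) = 0 := by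
  refine Polynomial.ext fun b => ?_
  rcases b with _ | n <;>
    simp [coeff_Dp, Polynomial.coeff_C]

lemma Dp_add (lam : k) (q q' : Polynomial (Polynomial k)) :
    Dp lam (q + q') = Dp lam q + Dp lam q' := by
  refine Polynomial.ext fun b => ?_
  simp only [coeff_Dp, Polynomial.coeff_add, map_add]
  ring

lemma Dp_mul_C (lam : k) (q : Polynomial (Polynomial k)) (r : k[X]) :
    Dp lam (q * Polynomial.C r) = Dp lam q * Polynomial.C r + q * Polynomial.C (derivative r) := by
  refine Polynomial.ext fun b => ?_
  simp only [coeff_Dp, Polynomial.coeff_add, Polynomial.coeff_mul_C, Polynomial.derivative_mul]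
  ring

lemma Dp_mul_X (lam : k) (q : Polynomial (Polynomial k)) :
    Dp lam (q * Polynomial.X)
      = Dp lam q * Polynomial.X + q * (Polynomial.C (Polynomial.C lam) * Polynomial.X) := by
  refine Polynomial.ext fun b => ?_
  rcases b with _ | n
  · simp [coeff_Dp, Polynomial.mul_coeff_zero]
  · have h1 : (q * Polynomial.X).coeff (n + 1) = q.coeff n := Polynomial.coeff_mul_X q n
    have h2 : (Dp lam q * Polynomial.X).coeff (n + 1) = (Dp lam q).coeff n :=
      Polynomial.coeff_mul_X _ n
    have h3 : (q * (Polynomial.C (Polynomial.C lam) * Polynomial.X)).coeff (n + 1)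
        = Polynomial.C lam * q.coeff n := by
      rw [show q * (Polynomial.C (Polynomial.C lam) * Polynomial.X)
          = Polynomial.C (Polynomial.C lam) * q * Polynomial.X by ring,
        Polynomial.coeff_mul_X, Polynomial.coeff_C_mul]
    rw [Polynomial.coeff_add, coeff_Dp, h1, h2, h3, coeff_Dp, Polynomial.C_mul,
      Polynomial.C_mul, Polynomial.C_eq_natCast, Polynomial.C_eq_natCast]
    push_cast
    ring

lemma Dp_smul_C (lam : k) (c : k) (q : Polynomial (Polynomial k)) :
    Dp lam (Polynomial.C (Polynomial.C c) * q)
      = Polynomial.C (Polynomial.C c) * Dp lam q := by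
  refine Polynomial.ext fun b => ?_
  simp only [coeff_Dp, Polynomial.coeff_C_mul, Polynomial.derivative_C_mul]
  ring

/-! ### Classification of `(Dp - n·λ)`-nilpotents -/

lemma coeff_Tn (lam μ : k) (q : Polynomial (Polynomial k)) (b : ℕ) :
    (Dp lam q - μ • q).coeff b
      = derivative (q.coeff b) + Polynomial.C (lam * b - μ) * q.coeff b := by
  rw [Polynomial.coeff_sub, coeff_Dp, Polynomial.coeff_smul, map_sub]
  rw [show (μ • q.coeff b : k[X]) = Polynomial.C μ * q.coeff b from Polynomial.smul_eq_C_mul μ]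
  ring

lemma classify_forward {lam : k} (hlam : lam ≠ 0) (n r : ℕ) (q : Polynomial (Polynomial k))
    (h : (fun q => Dp lam q - ((n : k) * lam) • q)^[r] q = 0) :
    q = Polynomial.C (q.coeff n) * Polynomial.X ^ n := by
  have key : ∀ b, b ≠ n → q.coeff b = 0 := by
    intro b hb
    have hiter : ∀ j, ((fun q => Dp lam q - ((n : k) * lam) • q)^[j] q).coeff b
        = (fun a => derivative a + Polynomial.C (lam * b - (n : k) * lam) * a)^[j] (q.coeff b) := by
      intro j
      induction j with
      | zero => rfl
      | succ j ih =>
          rw [Function.iterate_succ_apply', Function.iterate_succ_apply', coeff_Tn, ih]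
    have hc : lam * (b : k) - (n : k) * lam ≠ 0 := by
      intro h0
      apply hb
      have : lam * (b : k) = lam * (n : k) := by linear_combination h0
      exact_mod_cast mul_left_cancel₀ hlam this
    by_contra h0
    have hne := L_iter_ne_zero hc h0 r
    apply hne
    rw [← hiter r, h, Polynomial.coeff_zero]
  refine Polynomial.ext fun b => ?_
  by_cases hb : b = n
  · subst hb
    simp [Polynomial.coeff_C_mul, Polynomial.coeff_X_pow]
  · simp [key b hb, Polynomial.coeff_C_mul, Polynomial.coeff_X_pow, Ne.symm hb, hb]

lemma Tn_step (lam : k) (n : ℕ) (s : k[X]) :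
    Dp lam (Polynomial.C s * Polynomial.X ^ n)
        - ((n : k) * lam) • (Polynomial.C s * Polynomial.X ^ n)
      = Polynomial.C (derivative s) * Polynomial.X ^ n := by
  refine Polynomial.ext fun b => ?_
  rw [coeff_Tn]
  by_cases hb : b = n
  · subst hb
    have h0 : lam * (b : k) - (b : k) * lam = 0 := by ring
    simp [Polynomial.coeff_C_mul, Polynomial.coeff_X_pow, h0]
  · simp [Polynomial.coeff_C_mul, Polynomial.coeff_X_pow, Ne.symm hb, hb]

lemma classify_backward (lam : k) (n : ℕ) (s : k[X]) :
    (fun q => Dp lam q - ((n : k) * lam) • q)^[s.natDegree + 1]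
      (Polynomial.C s * Polynomial.X ^ n) = 0 := by
  have hiter : ∀ r, (fun q => Dp lam q - ((n : k) * lam) • q)^[r]
      (Polynomial.C s * Polynomial.X ^ n)
        = Polynomial.C (derivative^[r] s) * Polynomial.X ^ n := by
    intro r
    induction r with
    | zero => rfl
    | succ r ih =>
        rw [Function.iterate_succ_apply', ih, Function.iterate_succ_apply']
        exact Tn_step lam n _
  rw [hiter, Polynomial.iterate_derivative_eq_zero (lt_add_one _), map_zero, zero_mul]

/-! ### The kernel of `Dp` on the fraction field -/

lemma natDegree_Dp_le (lam : k) (q : Polynomial (Polynomial k)) :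
    (Dp lam q).natDegree ≤ q.natDegree := by
  rw [Polynomial.natDegree_le_iff_coeff_eq_zero]
  intro N hN
  rw [coeff_Dp, Polynomial.coeff_eq_zero_of_natDegree_lt hN, map_zero, mul_zero, add_zero]

lemma toprel {lam : k} {F G : Polynomial (Polynomial k)}
    (h : Dp lam F * G = F * Dp lam G) :
    (derivative F.leadingCoeff + Polynomial.C (lam * F.natDegree) * F.leadingCoeff)
        * G.leadingCoeff
      = F.leadingCoeff
        * (derivative G.leadingCoeff + Polynomial.C (lam * G.natDegree) * G.leadingCoeff) := by
  have key := congrArg (fun p => Polynomial.coeff p (F.natDegree + G.natDegree)) h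
  rw [coeff_mul_of_le (natDegree_Dp_le lam F) le_rfl,
    coeff_mul_of_le le_rfl (natDegree_Dp_le lam G), coeff_Dp, coeff_Dp,
    Polynomial.coeff_natDegree, Polynomial.coeff_natDegree] at key
  exact key

lemma degree_eq_of_rel {lam : k} (hlam : lam ≠ 0) {F G : Polynomial (Polynomial k)}
    (hF : F ≠ 0) (hG : G ≠ 0) (h : Dp lam F * G = F * Dp lam G) :
    F.natDegree = G.natDegree := by
  have t := toprel h
  set Fa := F.leadingCoeff with hFa
  set Gb := G.leadingCoeff with hGb
  have hFa0 : Fa ≠ 0 := Polynomial.leadingCoeff_ne_zero.mpr hF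
  have hGb0 : Gb ≠ 0 := Polynomial.leadingCoeff_ne_zero.mpr hG
  have key := congrArg (fun p => Polynomial.coeff p (Fa.natDegree + Gb.natDegree)) t
  simp only [add_mul, mul_add, Polynomial.coeff_add] at key
  have e1 : (derivative Fa * Gb).coeff (Fa.natDegree + Gb.natDegree) = 0 := by
    rw [coeff_mul_of_le ((Polynomial.natDegree_derivative_le Fa).trans (Nat.sub_le _ _)) le_rfl,
      Polynomial.coeff_derivative,
      Polynomial.coeff_eq_zero_of_natDegree_lt (lt_add_one Fa.natDegree), zero_mul, zero_mul]
  have e2 : (Fa * derivative Gb).coeff (Fa.natDegree + Gb.natDegree) = 0 := by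
    rw [coeff_mul_of_le le_rfl ((Polynomial.natDegree_derivative_le Gb).trans (Nat.sub_le _ _)),
      Polynomial.coeff_derivative,
      Polynomial.coeff_eq_zero_of_natDegree_lt (lt_add_one Gb.natDegree), zero_mul, mul_zero]
  have e3 : (Polynomial.C (lam * F.natDegree) * Fa * Gb).coeff (Fa.natDegree + Gb.natDegree)
      = lam * F.natDegree * (Fa.leadingCoeff * Gb.leadingCoeff) := by
    rw [mul_assoc, Polynomial.coeff_C_mul, Polynomial.coeff_mul_degree_add_degree]
  have e4 : (Fa * (Polynomial.C (lam * G.natDegree) * Gb)).coeff (Fa.natDegree + Gb.natDegree)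
      = lam * G.natDegree * (Fa.leadingCoeff * Gb.leadingCoeff) := by
    rw [show Fa * (Polynomial.C (lam * (G.natDegree : k)) * Gb)
        = Polynomial.C (lam * (G.natDegree : k)) * (Fa * Gb) by ring,
      Polynomial.coeff_C_mul, Polynomial.coeff_mul_degree_add_degree]
  rw [e1, e2, e3, e4, zero_add, zero_add] at key
  have hx : Fa.leadingCoeff * Gb.leadingCoeff ≠ 0 :=
    mul_ne_zero (Polynomial.leadingCoeff_ne_zero.mpr hFa0)
      (Polynomial.leadingCoeff_ne_zero.mpr hGb0)
  have := mul_right_cancel₀ hx key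
  have := mul_left_cancel₀ hlam this
  exact_mod_cast this

lemma rel_C_mul {lam : k} (hlam : lam ≠ 0) {F G : Polynomial (Polynomial k)}
    (hG : G ≠ 0) (h : Dp lam F * G = F * Dp lam G) :
    ∃ c : k, F = Polynomial.C (Polynomial.C c) * G := by
  by_cases hF : F = 0
  · exact ⟨0, by simp [hF]⟩
  have hab := degree_eq_of_rel hlam hF hG h
  have t := toprel h
  rw [hab] at t
  have t2 : derivative F.leadingCoeff * G.leadingCoeff
      = F.leadingCoeff * derivative G.leadingCoeff := by
    linear_combination t
  obtain ⟨c, hc⟩ := wronskian_eq_C_mul (Polynomial.leadingCoeff_ne_zero.mpr hG) t2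
  refine ⟨c, ?_⟩
  by_contra hne
  set H := F - Polynomial.C (Polynomial.C c) * G with hH
  have hH0 : H ≠ 0 := sub_ne_zero.mpr hne
  have hDpH : Dp lam H = Dp lam F - Polynomial.C (Polynomial.C c) * Dp lam G := by
    rw [hH, sub_eq_add_neg, show -(Polynomial.C (Polynomial.C c) * G)
        = Polynomial.C (Polynomial.C (-c)) * G by rw [map_neg, map_neg]; ring,
      Dp_add, Dp_smul_C, map_neg, map_neg]
    ring
  have hrel : Dp lam H * G = H * Dp lam G := by
    rw [hDpH, hH]
    linear_combination h
  have hd := degree_eq_of_rel hlam hH0 hG hrel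
  apply Polynomial.leadingCoeff_ne_zero.mpr hH0
  rw [Polynomial.leadingCoeff, hd, hH, Polynomial.coeff_sub, Polynomial.coeff_C_mul,
    Polynomial.coeff_natDegree, ← hab, Polynomial.coeff_natDegree, hc, sub_self]

/-! ### The isomorphism `k[x,y] ≃ₐ k[x][y]` -/

noncomputable def Phi (k : Type*) [CommSemiring k] :
    MvPolynomial (Fin 2) k ≃ₐ[k] Polynomial (Polynomial k) :=
  (renameEquiv k (Equiv.swap 0 1)).trans
    ((finSuccEquiv k 1).trans
      (Polynomial.mapAlgEquiv
        ((finSuccEquiv k 0).trans (Polynomial.mapAlgEquiv (isEmptyAlgEquiv k (Fin 0))))))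

lemma Phi_X1 {k : Type*} [CommSemiring k] : Phi k (MvPolynomial.X 1) = Polynomial.X := by
  rw [Phi]
  simp only [AlgEquiv.trans_apply, renameEquiv_apply, rename_X]
  rw [Equiv.swap_apply_right, finSuccEquiv_X_zero, Polynomial.coe_mapAlgEquiv, Polynomial.map_X]

lemma Phi_X0 {k : Type*} [CommSemiring k] :
    Phi k (MvPolynomial.X 0) = Polynomial.C Polynomial.X := by
  rw [Phi]
  simp only [AlgEquiv.trans_apply, renameEquiv_apply, rename_X]
  rw [Equiv.swap_apply_left, show (1 : Fin 2) = Fin.succ 0 from rfl, finSuccEquiv_X_succ,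
    Polynomial.coe_mapAlgEquiv, Polynomial.map_C, RingHom.coe_coe, AlgEquiv.trans_apply,
    finSuccEquiv_X_zero, Polynomial.coe_mapAlgEquiv, Polynomial.map_X]

lemma Phi_C {k : Type*} [CommSemiring k] (a : k) :
    Phi k (MvPolynomial.C a) = Polynomial.C (Polynomial.C a) := by
  simpa [MvPolynomial.algebraMap_eq, Polynomial.algebraMap_apply] using (Phi k).commutes a

lemma Phi_D (lam : k) (p : MvPolynomial (Fin 2) k) :
    Phi k (pderiv 0 p + MvPolynomial.C lam * (MvPolynomial.X 1 * pderiv 1 p))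
      = Dp lam (Phi k p) := by
  induction p using MvPolynomial.induction_on with
  | C a => simp [pderiv_C, Phi_C, Dp_CC]
  | add p q hp hq =>
      have hsplit : pderiv (0 : Fin 2) (p + q)
            + MvPolynomial.C lam * (MvPolynomial.X 1 * pderiv 1 (p + q))
          = (pderiv 0 p + MvPolynomial.C lam * (MvPolynomial.X 1 * pderiv 1 p))
            + (pderiv 0 q + MvPolynomial.C lam * (MvPolynomial.X 1 * pderiv 1 q)) := by
        rw [map_add, map_add]
        ring
      rw [hsplit, map_add, hp, hq, map_add, Dp_add]
  | mul_X p i hp =>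
      have hstep : pderiv 0 (p * MvPolynomial.X i)
            + MvPolynomial.C lam * (MvPolynomial.X 1 * pderiv 1 (p * MvPolynomial.X i))
          = (pderiv 0 p + MvPolynomial.C lam * (MvPolynomial.X 1 * pderiv 1 p))
              * MvPolynomial.X i
            + p * (pderiv 0 (MvPolynomial.X i)
              + MvPolynomial.C lam * (MvPolynomial.X 1 * pderiv 1 (MvPolynomial.X i))) := by
        rw [pderiv_mul, pderiv_mul]
        ring
      rw [hstep, map_add, map_mul, map_mul, hp, map_mul]
      have hi : i = 0 ∨ i = 1 := by fin_cases i; exacts [Or.inl rfl, Or.inr rfl]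
      rcases hi with rfl | rfl
      · rw [show pderiv (0 : Fin 2) (MvPolynomial.X (0 : Fin 2)) = 1 from pderiv_X_self 0,
          pderiv_X_of_ne (show (0 : Fin 2) ≠ 1 by decide)]
        rw [Phi_X0, Dp_mul_C]
        simp [Phi_C]
      · rw [pderiv_X_of_ne (show (1 : Fin 2) ≠ 0 by decide),
          show pderiv (1 : Fin 2) (MvPolynomial.X (1 : Fin 2)) = 1 from pderiv_X_self 1]
        rw [Phi_X1, Dp_mul_X]
        simp only [mul_zero, map_zero, zero_add, mul_one, map_mul, Phi_C, Phi_X1]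

lemma Phi_aeval (f : k[X]) :
    Phi k (Polynomial.aeval (MvPolynomial.X 0) f) = Polynomial.C f := by
  induction f using Polynomial.induction_on' with
  | add p q hp hq => rw [map_add, map_add, hp, hq, map_add]
  | monomial n a =>
      rw [Polynomial.aeval_monomial, map_mul, map_pow, Phi_X0,
        show (algebraMap k (MvPolynomial (Fin 2) k)) a = MvPolynomial.C a from rfl, Phi_C,
        ← Polynomial.C_pow, ← Polynomial.C_mul, ← Polynomial.C_mul_X_pow_eq_monomial]

lemma Phi_smul (c : k) (p : MvPolynomial (Fin 2) k) :
    Phi k (c • p) = c • Phi k p := by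
  rw [Algebra.smul_def, Algebra.smul_def, map_mul, AlgEquiv.commutes]

lemma Phi_iter (lam c : k) (r : ℕ) (p : MvPolynomial (Fin 2) k) :
    Phi k ((fun q => (pderiv 0 q + MvPolynomial.C lam * (MvPolynomial.X 1 * pderiv 1 q))
        - c • q)^[r] p)
      = (fun q => Dp lam q - c • q)^[r] (Phi k p) := by
  induction r generalizing p with
  | zero => rfl
  | succ r ih =>
      rw [Function.iterate_succ_apply, Function.iterate_succ_apply, ih, map_sub, Phi_D, Phi_smul]

/-! ### The main set-level lemma -/

lemma main2 {lam : k} (hlam : lam ≠ 0) (n : ℕ) :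
    {p : MvPolynomial (Fin 2) k | ∃ r : ℕ, 0 < r ∧
        (fun q => (pderiv 0 q + MvPolynomial.C lam * (MvPolynomial.X 1 * pderiv 1 q))
          - ((n : k) * lam) • q)^[r] p = 0}
      = {p | ∃ f : Polynomial k, p = Polynomial.aeval (MvPolynomial.X 0) f
          * MvPolynomial.X 1 ^ n} := by
  ext p
  simp only [Set.mem_setOf_eq]
  constructor
  · rintro ⟨r, -, hr⟩
    have h0 : (fun q => Dp lam q - ((n : k) * lam) • q)^[r] (Phi k p) = 0 := by
      rw [← Phi_iter, hr, map_zero]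
    have hcl := classify_forward hlam n r (Phi k p) h0
    refine ⟨(Phi k p).coeff n, ?_⟩
    apply (Phi k).injective
    rw [map_mul, Phi_aeval, map_pow, Phi_X1, ← hcl]
  · rintro ⟨f, rfl⟩
    refine ⟨f.natDegree + 1, Nat.succ_pos _, ?_⟩
    apply (Phi k).injective
    rw [Phi_iter, map_zero, map_mul, Phi_aeval, map_pow, Phi_X1]
    exact classify_backward lam n f

end MixedDerivAux

/-- For `D = ∂/∂x + λ y ∂/∂y` on `B = k[x,y]`, `λ ∈ k*` (char k = 0):
`B₀ = k[x]`, `B_{nλ} = k[x]·yⁿ` for each `n ≥ 0`, and the kernel of the extension of `D`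
to `k(x,y)` is `k` (i.e. `D(f)g = f D(g)` with `g ≠ 0` forces `f/g ∈ k`). -/
theorem mixed_derivation_structure (k : Type*) [Field k] [CharZero k] (lam : k)
    (hlam : lam ≠ 0) :
    let D : MvPolynomial (Fin 2) k → MvPolynomial (Fin 2) k :=
      fun p => pderiv 0 p + C lam * (X 1 * pderiv 1 p)
    ({p : MvPolynomial (Fin 2) k | ∃ r : ℕ, 0 < r ∧ D^[r] p = 0}
        = {p | ∃ f : Polynomial k, p = Polynomial.aeval (X 0) f}) ∧
    (∀ n : ℕ,
      {p : MvPolynomial (Fin 2) k | ∃ r : ℕ, 0 < r ∧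
          (fun q => D q - ((n : k) * lam) • q)^[r] p = 0}
        = {p | ∃ f : Polynomial k, p = Polynomial.aeval (X 0) f * X 1 ^ n}) ∧
    (∀ f g : MvPolynomial (Fin 2) k, g ≠ 0 → D f * g = f * D g → ∃ c : k, f = C c * g) := by
  intro D
  refine ⟨?_, ?_, ?_⟩
  · have h0 := MixedDerivAux.main2 (k := k) hlam 0
    simp only [Nat.cast_zero, zero_mul, zero_smul, sub_zero, pow_zero, mul_one] at h0
    exact h0
  · intro n
    exact MixedDerivAux.main2 (k := k) hlam n
  · intro f g hg hrel
    have h1 : MixedDerivAux.Dp lam (MixedDerivAux.Phi k f) * MixedDerivAux.Phi k g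
        = MixedDerivAux.Phi k f * MixedDerivAux.Dp lam (MixedDerivAux.Phi k g) := by
      rw [← MixedDerivAux.Phi_D, ← MixedDerivAux.Phi_D, ← map_mul, ← map_mul]
      exact congrArg _ hrel
    have hG : MixedDerivAux.Phi k g ≠ 0 := by
      intro h0
      exact hg ((MixedDerivAux.Phi k).injective (by rw [h0, map_zero]))
    obtain ⟨c, hc⟩ := MixedDerivAux.rel_C_mul hlam hG h1
    refine ⟨c, (MixedDerivAux.Phi k).injective ?_⟩
    rw [map_mul, MixedDerivAux.Phi_C, ← hc]
end
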